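/- arXiv:2003.09107 — 2 statements merged into one kernel-verified Lean document; each statement's English description precedes it below -/
import Mathlib

section
/- Let V be a finite-dimensional vector space over ℂ, B a symmetric bilinear form on V, and g : V ≃ V a linear automorphism preserving B, i.e. B(g x, g y) = B(x, y) for all x, y ∈ V. Let s : V → V be a ℂ-linear map such that s x = λ • x for every λ ∈ ℂ and every x in the generalized eigenspace of g with eigenvalue λ. Then B is invariant under s: B(s x, s y) = B(x, y) for all x, y ∈ V. -/
/-!
Writing `g x = λ x + (g - λ) x` and `g y = μ y + (g - μ) y`, invariance of `B` under `g` gives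
`(1 - λμ) B(x, y)` as a combination of values of `B` on pairs of vectors that are killed by
smaller powers of `g - λ` and `g - μ`. Hence generalized eigenspaces of `g` for eigenvalues with
`λμ ≠ 1` are `B`-orthogonal, and on a pair of generalized eigenvectors `s` multiplies `B` by
`λμ`, which is `1` whenever `B(x, y)` can be nonzero. Since the generalized eigenspaces span `V`,
`B(s ·, s ·) = B`.
-/

namespace LinearMap

variable {R M N : Type*} [CommSemiring R] [AddCommMonoid M] [Module R M]
  [AddCommMonoid N] [Module R N]

theorem ext₂_of_iSup_eq_top {ι : Sort*} {p : ι → Submodule R M} (hp : ⨆ i, p i = ⊤)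
    {B₁ B₂ : M →ₗ[R] M →ₗ[R] N} (h : ∀ i j, ∀ x ∈ p i, ∀ y ∈ p j, B₁ x y = B₂ x y) :
    B₁ = B₂ := by
  have hspan : Submodule.span R (⋃ i, (p i : Set M)) = ⊤ := by
    rw [← Submodule.iSup_eq_span, hp]
  refine ext_on hspan fun x hx ↦ ext_on hspan fun y hy ↦ ?_
  obtain ⟨i, hx⟩ := Set.mem_iUnion.mp hx
  obtain ⟨j, hy⟩ := Set.mem_iUnion.mp hy
  exact h i j x hx y hy

end LinearMap

namespace Module.End

variable {K V : Type*} [Field K] [AddCommGroup V] [Module K V]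
  {B : V →ₗ[K] V →ₗ[K] K} {f : End K V}

theorem one_sub_mul_mul_apply_eq (hf : ∀ x y, B (f x) (f y) = B x y) (a b : K) (x y : V) :
    (1 - a * b) * B x y =
      a * B x ((f - b • 1) y) + b * B ((f - a • 1) x) y + B ((f - a • 1) x) ((f - b • 1) y) := by
  have hfx : f x = a • x + (f - a • 1) x := by simp
  have hfy : f y = b • y + (f - b • 1) y := by simp
  have hBf := hf x y
  rw [hfx, hfy] at hBf
  simp only [map_add, map_smul, LinearMap.add_apply, LinearMap.smul_apply, smul_eq_mul] at hBf
  linear_combination -hBf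

theorem apply_eq_zero_of_pow_sub_smul_apply_eq_zero (hf : ∀ x y, B (f x) (f y) = B x y)
    {a b : K} (hab : a * b ≠ 1) (k l : ℕ) {x y : V} (hx : ((f - a • 1) ^ k) x = 0)
    (hy : ((f - b • 1) ^ l) y = 0) : B x y = 0 := by
  induction k generalizing l x y with
  | zero => simp_all
  | succ k ihk =>
    induction l generalizing y with
    | zero => simp_all
    | succ l ihl =>
      have hx' : ((f - a • 1) ^ k) ((f - a • 1) x) = 0 := by rwa [pow_succ, mul_apply] at hx
      have hy' : ((f - b • 1) ^ l) ((f - b • 1) y) = 0 := by rwa [pow_succ, mul_apply] at hy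
      have h := one_sub_mul_mul_apply_eq hf a b x y
      rw [ihl hy', ihk (l + 1) hx' hy, ihk l hx' hy', mul_zero, mul_zero, add_zero,
        add_zero] at h
      exact (mul_eq_zero.mp h).resolve_left (sub_ne_zero.mpr hab.symm)

theorem apply_eq_zero_of_mem_maxGenEigenspace (hf : ∀ x y, B (f x) (f y) = B x y)
    {a b : K} (hab : a * b ≠ 1) {x y : V} (hx : x ∈ f.maxGenEigenspace a)
    (hy : y ∈ f.maxGenEigenspace b) : B x y = 0 := by
  obtain ⟨k, hx⟩ := (mem_maxGenEigenspace f a x).mp hx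
  obtain ⟨l, hy⟩ := (mem_maxGenEigenspace f b y).mp hy
  exact apply_eq_zero_of_pow_sub_smul_apply_eq_zero hf hab k l hx hy

theorem apply_smul_smul_of_mem_maxGenEigenspace (hf : ∀ x y, B (f x) (f y) = B x y)
    {a b : K} {x y : V} (hx : x ∈ f.maxGenEigenspace a) (hy : y ∈ f.maxGenEigenspace b) :
    B (a • x) (b • y) = B x y := by
  rw [map_smul, map_smul, LinearMap.smul_apply, smul_eq_mul, smul_eq_mul, ← mul_assoc]
  by_cases hab : a * b = 1
  · rw [mul_comm b a, hab, one_mul]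
  · rw [apply_eq_zero_of_mem_maxGenEigenspace hf hab hx hy, mul_zero]

end Module.End

theorem bilin_invariant_under_semisimplePart_general
    (V : Type*) [AddCommGroup V] [Module ℂ V] [FiniteDimensional ℂ V]
    (B : V →ₗ[ℂ] V →ₗ[ℂ] ℂ)
    (g : V ≃ₗ[ℂ] V) (hBg : ∀ x y : V, B (g x) (g y) = B x y)
    (s : V →ₗ[ℂ] V)
    (hs : ∀ (lam : ℂ) (x : V),
      x ∈ Module.End.maxGenEigenspace g.toLinearMap lam → s x = lam • x)
    (x y : V) : B (s x) (s y) = B x y := by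
  have hBs : B.compl₁₂ s s = B :=
    LinearMap.ext₂_of_iSup_eq_top (Module.End.iSup_maxGenEigenspace_eq_top g.toLinearMap)
      fun a b x hx y hy ↦ by
        rw [LinearMap.compl₁₂_apply, hs a x hx, hs b y hy]
        exact Module.End.apply_smul_smul_of_mem_maxGenEigenspace hBg hx hy
  exact LinearMap.congr_fun₂ hBs x y

/-- If a linear automorphism `g` of a finite-dimensional complex vector space preserves a
symmetric bilinear form `B`, then so does the semisimple part `s` of `g`, i.e. the linear
map acting as the scalar `λ` on each generalized eigenspace of `g` with eigenvalue `λ`. -/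
theorem bilin_invariant_under_semisimplePart
    (V : Type*) [AddCommGroup V] [Module ℂ V] [FiniteDimensional ℂ V]
    (B : V →ₗ[ℂ] V →ₗ[ℂ] ℂ) (hBsymm : ∀ x y : V, B x y = B y x)
    (g : V ≃ₗ[ℂ] V) (hBg : ∀ x y : V, B (g x) (g y) = B x y)
    (s : V →ₗ[ℂ] V)
    (hs : ∀ (lam : ℂ) (x : V),
      x ∈ Module.End.maxGenEigenspace g.toLinearMap lam → s x = lam • x)
    (x y : V) : B (s x) (s y) = B x y :=
  bilin_invariant_under_semisimplePart_general V B g hBg s hs x y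
end

section
/- Let L be a finite-dimensional Lie algebra over ℂ and g a Lie algebra automorphism of L. Let S be the submodule of L spanned by (i.e. the supremum of) the generalized eigenspaces of g whose eigenvalues are positive real numbers. Then S is closed under the Lie bracket: if x ∈ S and y ∈ S then ⁅x, y⁆ ∈ S. -/
namespace Module.End

variable {R M N P : Type*} [CommRing R] [AddCommGroup M] [Module R M]
  [AddCommGroup N] [Module R N] [AddCommGroup P] [Module R P]

lemma mem_maxGenEigenspace_of_sub_smul_apply_mem {f : End R M} {μ : R} {m : M}
    (hm : (f - μ • 1) m ∈ f.maxGenEigenspace μ) : m ∈ f.maxGenEigenspace μ := by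
  obtain ⟨k, hk⟩ := (mem_maxGenEigenspace _ _ _).1 hm
  exact (mem_maxGenEigenspace _ _ _).2 ⟨k + 1, by rwa [pow_succ, mul_apply]⟩

/-- Induction on the nilpotency orders of `x` and `y`, driven by the Leibniz-type identity
`(h - λμ) B x y = B ((f - λ) x) (g y) + λ B x ((g - μ) y)`. -/
lemma apply_apply_mem_maxGenEigenspace_mul (B : M →ₗ[R] N →ₗ[R] P)
    {f : End R M} {g : End R N} {h : End R P} (hB : ∀ x y, h (B x y) = B (f x) (g y))
    {lam mu : R} {x : M} {y : N} (hx : x ∈ f.maxGenEigenspace lam)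
    (hy : y ∈ g.maxGenEigenspace mu) : B x y ∈ h.maxGenEigenspace (lam * mu) := by
  obtain ⟨m, hm⟩ := (mem_maxGenEigenspace _ _ _).1 hx
  clear hx
  induction m generalizing x y with
  | zero => simp_all
  | succ m ihm =>
    obtain ⟨n, hn⟩ := (mem_maxGenEigenspace _ _ _).1 hy
    clear hy
    induction n generalizing y with
    | zero => simp_all
    | succ n ihn =>
      have hy : y ∈ g.maxGenEigenspace mu := (mem_maxGenEigenspace _ _ _).2 ⟨_, hn⟩
      have leibniz : (h - (lam * mu) • 1) (B x y) =
          B ((f - lam • 1) x) (g y) + lam • B x ((g - mu • 1) y) := by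
        simp only [LinearMap.sub_apply, LinearMap.smul_apply, one_apply, hB, map_sub, map_smul,
          mul_smul, smul_sub]
        abel
      apply mem_maxGenEigenspace_of_sub_smul_apply_mem
      rw [leibniz]
      refine add_mem (ihm (mapsTo_maxGenEigenspace_of_comm (Commute.refl g) mu hy) ?_)
        (Submodule.smul_mem _ _ (ihn ?_))
      · rwa [← mul_apply, ← pow_succ]
      · rwa [← mul_apply, ← pow_succ]

lemma map₂_biSup_maxGenEigenspace_le (B : M →ₗ[R] M →ₗ[R] M) {f : End R M}
    (hB : ∀ x y, f (B x y) = B (f x) (f y)) {s : Set R} (hs : ∀ a ∈ s, ∀ b ∈ s, a * b ∈ s) :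
    Submodule.map₂ B (⨆ lam ∈ s, f.maxGenEigenspace lam) (⨆ mu ∈ s, f.maxGenEigenspace mu) ≤
      ⨆ nu ∈ s, f.maxGenEigenspace nu := by
  simp only [Submodule.map₂_iSup_right, Submodule.map₂_iSup_left]
  refine iSup₂_le fun mu hmu ↦ iSup₂_le fun lam hlam ↦ Submodule.map₂_le.2 fun x hx y hy ↦ ?_
  exact le_biSup (fun nu ↦ f.maxGenEigenspace nu) (hs lam hlam mu hmu)
    (apply_apply_mem_maxGenEigenspace_mul B hB hx hy)

end Module.End

lemma exists_pos_ofReal_mul {a b : ℂ} (ha : ∃ r : ℝ, 0 < r ∧ a = r)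
    (hb : ∃ s : ℝ, 0 < s ∧ b = s) : ∃ t : ℝ, 0 < t ∧ a * b = t := by
  obtain ⟨r, hr, rfl⟩ := ha
  obtain ⟨s, hs, rfl⟩ := hb
  exact ⟨r * s, mul_pos hr hs, (Complex.ofReal_mul r s).symm⟩

theorem bracket_mem_sup_maxGenEigenspace_posReal_general
    (L : Type*) [LieRing L] [LieAlgebra ℂ L]
    (g : L ≃ₗ⁅ℂ⁆ L)
    (S : Submodule ℂ L)
    (hS : S = ⨆ lam ∈ {lam : ℂ | ∃ r : ℝ, 0 < r ∧ lam = (r : ℂ)},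
      Module.End.maxGenEigenspace g.toLinearEquiv.toLinearMap lam)
    (x y : L) (hx : x ∈ S) (hy : y ∈ S) : ⁅x, y⁆ ∈ S := by
  subst hS
  refine Submodule.map₂_le.1 (Module.End.map₂_biSup_maxGenEigenspace_le
    (LieModule.toEnd ℂ L L : L →ₗ[ℂ] Module.End ℂ L) (fun a b ↦ g.map_lie a b) ?_) x hx y hy
  exact fun _ ha _ hb ↦ exists_pos_ofReal_mul ha hb

/-- The sum of the generalized eigenspaces of a Lie algebra automorphism `g` of a
finite-dimensional complex Lie algebra whose eigenvalues are positive real numbers is closed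
under the Lie bracket. -/
theorem bracket_mem_sup_maxGenEigenspace_posReal
    (L : Type*) [LieRing L] [LieAlgebra ℂ L] [FiniteDimensional ℂ L]
    (g : L ≃ₗ⁅ℂ⁆ L)
    (S : Submodule ℂ L)
    (hS : S = ⨆ lam ∈ {lam : ℂ | ∃ r : ℝ, 0 < r ∧ lam = (r : ℂ)},
      Module.End.maxGenEigenspace g.toLinearEquiv.toLinearMap lam)
    (x y : L) (hx : x ∈ S) (hy : y ∈ S) : ⁅x, y⁆ ∈ S :=
  bracket_mem_sup_maxGenEigenspace_posReal_general L g S hS x y hx hy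
end
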